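/- For every constant c ∈ [0, 2/3] and every x ∈ [0, π/2], the inequality (F j_c)(x) ≥ j_{c + 1/12}(x) holds. -/

import Mathlib

noncomputable section

open Real Set

def k0 (x : ℝ) : ℝ := max |x - 1| ((|x - 1| + 1) / 2)

def m0 (x : ℝ) : ℝ := x - k0 x

def Fop (f : ℝ → ℝ) (x : ℝ) : ℝ := 1 + ∫ u in (0:ℝ)..x, m0 (f (π/2 - u))

def jc (c : ℝ) (x : ℝ) : ℝ := max (1 - x) c

lemma m0_eq (y : ℝ) (h0 : 0 ≤ y) (h1 : y ≤ 1) : m0 y = (3*y - 2)/2 := by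
  unfold m0 k0
  rw [abs_of_nonpos (by linarith), max_eq_right (by linarith)]
  ring

lemma cont_aux (c : ℝ) : Continuous fun u : ℝ => m0 (jc c (π/2 - u)) := by
  unfold m0 k0 jc
  fun_prop

lemma int_lin (a b A B : ℝ) :
    (∫ u in a..b, (A*u + B)) = A*(b^2 - a^2)/2 + B*(b - a) := by
  have h1 : IntervalIntegrable (fun u : ℝ => A*u) MeasureTheory.volume a b :=
    (continuous_const.mul continuous_id).intervalIntegrable a b
  rw [intervalIntegral.integral_add h1 (intervalIntegrable_const),
    intervalIntegral.integral_const_mul, integral_id, intervalIntegral.integral_const,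
    smul_eq_mul]
  ring

theorem stmt_16 (c : ℝ) (hc : c ∈ Icc (0:ℝ) (2/3)) (x : ℝ) (hx : x ∈ Icc (0:ℝ) (π/2)) :
    jc (c + 1/12) x ≤ Fop (jc c) x := by
  obtain ⟨hc0, hc1⟩ := hc
  obtain ⟨hx0, hx1⟩ := hx
  have hpi : (3.141592 : ℝ) < π := pi_gt_d6
  have hpi' : π < 3.141593 := pi_lt_d6
  set u0 : ℝ := π/2 - 1 + c with hu0
  have hu00 : 0 ≤ u0 := by rw [hu0]; nlinarith
  rcases le_or_gt x u0 with hcase | hcase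
  · have hI : (∫ u in (0:ℝ)..x, m0 (jc c (π/2 - u))) = x * ((3*c - 2)/2) := by
      rw [intervalIntegral.integral_congr (g := fun _ => (3*c - 2)/2) ?_,
        intervalIntegral.integral_const, smul_eq_mul]
      · ring
      · intro u hu
        rw [Set.uIcc_of_le hx0] at hu
        obtain ⟨hu1, hu2⟩ := hu
        have h1 : jc c (π/2 - u) = c := by
          unfold jc
          rw [max_eq_right (by rw [hu0] at hcase; linarith)]
        show m0 (jc c (π/2 - u)) = (3*c - 2)/2
        rw [h1, m0_eq c hc0 (by linarith)]
    unfold Fop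
    rw [hI]
    unfold jc
    have hxc : x ≤ π/2 - 1 + c := hcase
    apply max_le
    · nlinarith [mul_nonneg hx0 hc0]
    · nlinarith [mul_nonneg (by linarith : (0:ℝ) ≤ π/2 - 1 + c - x)
          (by linarith : (0:ℝ) ≤ 2 - 3*c),
        sq_nonneg (c - 7/6 + π/4), mul_pos (by linarith : (0:ℝ) < π - 3.141592)
          (by linarith : (0:ℝ) < 3.141593 - π)]
  · have hint1 : IntervalIntegrable (fun u : ℝ => m0 (jc c (π/2 - u)))
        MeasureTheory.volume 0 u0 := (cont_aux c).intervalIntegrable 0 u0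
    have hint2 : IntervalIntegrable (fun u : ℝ => m0 (jc c (π/2 - u)))
        MeasureTheory.volume u0 x := (cont_aux c).intervalIntegrable u0 x
    have hsplit : (∫ u in (0:ℝ)..x, m0 (jc c (π/2 - u)))
        = (∫ u in (0:ℝ)..u0, m0 (jc c (π/2 - u)))
          + ∫ u in u0..x, m0 (jc c (π/2 - u)) :=
      (intervalIntegral.integral_add_adjacent_intervals hint1 hint2).symm
    have hI1 : (∫ u in (0:ℝ)..u0, m0 (jc c (π/2 - u))) = u0 * ((3*c - 2)/2) := by
      rw [intervalIntegral.integral_congr (g := fun _ => (3*c - 2)/2) ?_,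
        intervalIntegral.integral_const, smul_eq_mul]
      · ring
      · intro u hu
        rw [Set.uIcc_of_le hu00] at hu
        obtain ⟨hu1, hu2⟩ := hu
        have h1 : jc c (π/2 - u) = c := by
          unfold jc
          rw [max_eq_right (by rw [hu0] at hu2; linarith)]
        show m0 (jc c (π/2 - u)) = (3*c - 2)/2
        rw [h1, m0_eq c hc0 (by linarith)]
    have hI2 : (∫ u in u0..x, m0 (jc c (π/2 - u)))
        = (3/2)*(x^2 - u0^2)/2 + ((1 - 3*π/2)/2)*(x - u0) := by
      rw [intervalIntegral.integral_congr (g := fun u => (3/2)*u + (1 - 3*π/2)/2) ?_,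
        int_lin]
      intro u hu
      rw [Set.uIcc_of_le hcase.le] at hu
      obtain ⟨hu1, hu2⟩ := hu
      have h1 : jc c (π/2 - u) = 1 - (π/2 - u) := by
        unfold jc
        rw [max_eq_left (by rw [hu0] at hu1; linarith)]
      show m0 (jc c (π/2 - u)) = 3/2*u + (1 - 3*π/2)/2
      rw [h1, m0_eq (1 - (π/2 - u)) (by rw [hu0] at hu1; linarith) (by linarith)]
      ring
    unfold Fop
    rw [hsplit, hI1, hI2]
    unfold jc
    have hxc : π/2 - 1 + c < x := hcase
    rw [hu0]
    apply max_le
    · nlinarith [sq_nonneg (x - (π/2 - 1 + c)),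
        mul_nonneg hc0 (by linarith : (0:ℝ) ≤ x - (π/2 - 1 + c)),
        mul_nonneg hc0 (show (0:ℝ) ≤ π/2 - 1 + c from hu0 ▸ hu00)]
    · nlinarith [sq_nonneg (x - π/2 + 1/3), sq_nonneg (c + π/2 - 5/3),
        mul_pos (by linarith : (0:ℝ) < π - 3.141592)
          (by linarith : (0:ℝ) < 3.141593 - π)]
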